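/- Suppose the i.i.d. environment satisfies the tail assumption with some exponent α > 0. Fix r > 0, 0 ≤ s₁ < s₂ ≤ 1 and a < b, and for n ∈ ℕ define N^{(n)} = #{ (i,x) ∈ ℤ² : i + x is even, s₁ < i/n < s₂, a < x/√n < b, ω_{(i,x)} > r·m(n^{3/2}) }. Then E[N^{(n)}] → (1/2)(s₂ − s₁)(b − a) r^{−α} as n → ∞. -/

import Mathlib

open MeasureTheory ProbabilityTheory Filter

noncomputable section

/-- A function `L` is slowly varying (at infinity) if `L (t x) / L x → 1` as `x → ∞`
for every fixed `t > 0`. -/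
def SlowlyVarying (L : ℝ → ℝ) : Prop :=
  ∀ t > 0, Filter.Tendsto (fun x => L (t * x) / L x) Filter.atTop (nhds 1)

/-- `m(t) = inf {x : F̄(x) ≤ 1/t}`. -/
def mFun (Fbar : ℝ → ℝ) (t : ℝ) : ℝ := sInf {x : ℝ | Fbar x ≤ 1 / t}

/-- The nearest-neighbour path determined by a sequence of signs: `s_i = Σ_{j<i} ±1`. -/
def pathOf (n : ℕ) (ε : Fin n → Bool) (i : ℕ) : ℤ :=
  ∑ j : Fin n, if (j : ℕ) < i then (if ε j then (1 : ℤ) else -1) else 0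

/-- Energy of the path encoded by `ε` in environment `ω`. -/
def Hpoly (n : ℕ) (ω : ℤ × ℤ → ℝ) (ε : Fin n → Bool) : ℝ :=
  ∑ i ∈ Finset.Icc 1 n, ω ((i : ℤ), pathOf n ε i)

/-- Partition function restricted to a set of paths. -/
def ZpartOn (n : ℕ) (β : ℝ) (ω : ℤ × ℤ → ℝ) (A : Finset (Fin n → Bool)) : ℝ :=
  (2 : ℝ)⁻¹ ^ n * ∑ ε ∈ A, Real.exp (β * Hpoly n ω ε)

/-- Full partition function `Z^ω_{n,β}`. -/
def Zpart (n : ℕ) (β : ℝ) (ω : ℤ × ℤ → ℝ) : ℝ := ZpartOn n β ω Finset.univ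

/-- Truncated environment `ω̃_v = ω_v 1_{ω_v ≤ k}`. -/
def trunc (k : ℝ) (ω : ℤ × ℤ → ℝ) : ℤ × ℤ → ℝ := fun v => if ω v ≤ k then ω v else 0

/-- Convergence in distribution: convergence of integrals of bounded continuous functions. -/
def TendstoInDistribution {Ω : Type*} [MeasurableSpace Ω] (μ : Measure Ω)
    (X : ℕ → Ω → ℝ) (ν : Measure ℝ) : Prop :=
  ∀ f : ℝ → ℝ, Continuous f → (∃ C, ∀ x, |f x| ≤ C) →
    Filter.Tendsto (fun n => ∫ a, f (X n a) ∂μ) Filter.atTop (nhds (∫ x, f x ∂ν))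

/-- The centered Gaussian law on ℝ with variance `2 π^{-1/2}`. -/
def gaussLimit : Measure ℝ := gaussianReal 0 (Real.toNNReal (2 / Real.sqrt Real.pi))

/-- The block `B = {(i,x) : 1 ≤ i ≤ n, |x| < h}`. -/
def Bblock (n : ℕ) (h : ℤ) : Finset (ℤ × ℤ) := (Finset.Icc (1 : ℤ) n) ×ˢ (Finset.Ioo (-h) h)

/-- Excess weight `M = Σ_{v ∈ B} ω_v 1_{ω_v > k}`. -/
def Mexc (n : ℕ) (h : ℤ) (k : ℝ) (ω : ℤ × ℤ → ℝ) : ℝ :=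
  ∑ v ∈ Bblock n h, if k < ω v then ω v else 0

open Classical in
/-- Paths staying strictly inside the cylinder of half-width `h`. -/
def Cset (n : ℕ) (h : ℤ) : Finset (Fin n → Bool) :=
  Finset.univ.filter (fun ε => ∀ i ∈ Finset.Icc 1 n, |pathOf n ε i| < h)

/-- Simple random walk transition kernel `p(i,x)`. -/
def srw (i : ℕ) (x : ℤ) : ℝ :=
  if x.natAbs ≤ i ∧ ((i : ℤ) + x) % 2 = 0 then
    (2 : ℝ)⁻¹ ^ i * (Nat.choose i (((i : ℤ) + x).toNat / 2) : ℝ)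
  else 0

/-- The lattice points `(i,x)` with `i + x` even, `s₁ < i/n < s₂` and `a < x/√n < b`. -/
def idxSet (n : ℕ) (s₁ s₂ a b : ℝ) : Finset (ℤ × ℤ) :=
  ((Finset.Icc (0 : ℤ) (n : ℤ)) ×ˢ
      (Finset.Icc ⌈a * Real.sqrt n⌉ ⌊b * Real.sqrt n⌋)).filter
    (fun v => (v.1 + v.2) % 2 = 0 ∧ s₁ < (v.1 : ℝ) / n ∧ (v.1 : ℝ) / n < s₂ ∧
      a < (v.2 : ℝ) / Real.sqrt n ∧ (v.2 : ℝ) / Real.sqrt n < b)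

/-!
By linearity and identical distribution, `E[N⁽ⁿ⁾] = #idxSet · F̄(r m(n^{3/2}))`. The box of
lattice points has about `(s₂ - s₁)(b - a) n^{3/2}` points, half of them with even coordinate sum.
The tail `F̄` is regularly varying with index `-α`, and the quantile satisfies
`F̄(c m(t)) ≤ 1/t < F̄(c' m(t))` for `c' < 1 < c`; comparing `F̄(r m(t))` with `F̄(c m(t))` for `c`
close to `1` gives `t F̄(r m(t)) → r^{-α}`.
-/

open Finset Topology

def RegularlyVarying (F : ℝ → ℝ) (ρ : ℝ) : Prop :=
  ∀ c > 0, Tendsto (fun x => F (c * x) / F x) atTop (𝓝 (c ^ ρ))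

lemma regularlyVarying_of_eq_rpow_mul {F L : ℝ → ℝ} {ρ : ℝ} (hL : SlowlyVarying L)
    (hLpos : ∀ x > 0, 0 < L x) (hF : ∀ x > 0, F x = x ^ ρ * L x) : RegularlyVarying F ρ := by
  intro c hc
  have hlim : Tendsto (fun x => c ^ ρ * (L (c * x) / L x)) atTop (𝓝 (c ^ ρ)) := by
    simpa using (hL c hc).const_mul (c ^ ρ)
  refine hlim.congr' ?_
  filter_upwards [eventually_gt_atTop 0] with x hx
  have hcx : 0 < c * x := mul_pos hc hx
  rw [hF x hx, hF _ hcx, Real.mul_rpow hc.le hx.le]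
  have hLx := hLpos x hx
  have hxρ : 0 < x ^ ρ := Real.rpow_pos_of_pos hx ρ
  field_simp

lemma RegularlyVarying.tendsto_div {F : ℝ → ℝ} {ρ : ℝ} (hF : RegularlyVarying F ρ)
    (hne : ∀ᶠ x in atTop, F x ≠ 0) {a b : ℝ} (ha : 0 < a) (hb : 0 < b) :
    Tendsto (fun x => F (a * x) / F (b * x)) atTop (𝓝 (a ^ ρ / b ^ ρ)) := by
  refine ((hF a ha).div (hF b hb) (Real.rpow_pos_of_pos hb ρ).ne').congr' ?_
  filter_upwards [hne] with x hx
  exact div_div_div_cancel_right₀ hx _ _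

section Quantile

variable {F : ℝ → ℝ} {t x : ℝ}

lemma le_mFun (hF : Antitone F) (hne : {x | F x ≤ 1 / t}.Nonempty) (hx : 1 / t < F x) :
    x ≤ mFun F t :=
  le_csInf hne fun _ hy => le_of_not_gt fun hyx => (hx.trans_le (hF hyx.le)).not_ge hy

lemma one_div_lt_of_lt_mFun (hbdd : BddBelow {x | F x ≤ 1 / t}) (hx : x < mFun F t) :
    1 / t < F x :=
  lt_of_not_ge fun h => hx.not_ge (csInf_le hbdd h)

lemma le_one_div_of_mFun_lt (hF : Antitone F) (hne : {x | F x ≤ 1 / t}.Nonempty)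
    (hx : mFun F t < x) : F x ≤ 1 / t :=
  let ⟨_, hy, hyx⟩ := exists_lt_of_csInf_lt hne hx
  (hF hyx.le).trans hy

lemma eventually_one_div_lt_and_nonempty (h0 : Tendsto F atTop (𝓝 0))
    (hpos : ∀ x > 0, 0 < F x) {x₀ : ℝ} (hx₀ : 0 < x₀) :
    ∀ᶠ t in atTop, 1 / t < F x₀ ∧ {x | F x ≤ 1 / t}.Nonempty := by
  have hinv : Tendsto (fun t : ℝ => 1 / t) atTop (𝓝 0) :=
    tendsto_const_nhds.div_atTop tendsto_id
  filter_upwards [hinv.eventually_lt_const (hpos x₀ hx₀), eventually_gt_atTop 0] with t h ht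
  exact ⟨h, (h0.eventually_lt_const (one_div_pos.2 ht)).exists.imp fun _ => le_of_lt⟩

lemma tendsto_mFun_atTop (hF : Antitone F) (h0 : Tendsto F atTop (𝓝 0))
    (hpos : ∀ x > 0, 0 < F x) : Tendsto (mFun F) atTop atTop := by
  refine tendsto_atTop.2 fun M => ?_
  have hM : (0 : ℝ) < max M 1 := lt_max_of_lt_right one_pos
  filter_upwards [eventually_one_div_lt_and_nonempty h0 hpos hM] with t ⟨hlt, hne⟩
  exact (le_max_left M 1).trans (le_mFun hF hne hlt)

lemma eventually_mul_apply_mul_mFun_le_one (hF : Antitone F) (h0 : Tendsto F atTop (𝓝 0))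
    (hpos : ∀ x > 0, 0 < F x) {c : ℝ} (hc : 1 < c) :
    ∀ᶠ t in atTop, t * F (c * mFun F t) ≤ 1 := by
  filter_upwards [eventually_one_div_lt_and_nonempty h0 hpos one_pos, eventually_gt_atTop 0,
    (tendsto_mFun_atTop hF h0 hpos).eventually_gt_atTop 0] with t ⟨_, hne⟩ ht hm
  have := le_one_div_of_mFun_lt hF hne (lt_mul_left hm hc)
  rwa [le_div_iff₀ ht, mul_comm] at this

lemma eventually_one_lt_mul_apply_mul_mFun (hF : Antitone F) (h0 : Tendsto F atTop (𝓝 0))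
    (hpos : ∀ x > 0, 0 < F x) {c : ℝ} (hc : c < 1) :
    ∀ᶠ t in atTop, 1 < t * F (c * mFun F t) := by
  filter_upwards [eventually_one_div_lt_and_nonempty h0 hpos one_pos, eventually_gt_atTop 0,
    (tendsto_mFun_atTop hF h0 hpos).eventually_gt_atTop 0] with t ⟨hlt, _⟩ ht hm
  have hbdd : BddBelow {x | F x ≤ 1 / t} :=
    ⟨1, fun y hy => le_of_not_gt fun hy1 => (hlt.trans_le (hF hy1.le)).not_ge hy⟩
  have := one_div_lt_of_lt_mFun hbdd (mul_lt_of_lt_one_left hm hc)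
  rwa [div_lt_iff₀ ht, mul_comm] at this

theorem RegularlyVarying.tendsto_mul_apply_mul_mFun {ρ r : ℝ} (hreg : RegularlyVarying F ρ)
    (hF : Antitone F) (h0 : Tendsto F atTop (𝓝 0))
    (hpos : ∀ x > 0, 0 < F x) (hr : 0 < r) :
    Tendsto (fun t => t * F (r * mFun F t)) atTop (𝓝 (r ^ ρ)) := by
  have hm := tendsto_mFun_atTop hF h0 hpos
  have hne : ∀ᶠ x in atTop, F x ≠ 0 := (eventually_gt_atTop 0).mono fun x hx => (hpos x hx).ne'
  have hratio : ∀ c > 0, Tendsto (fun t => F (r * mFun F t) / F (c * mFun F t)) atTop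
      (𝓝 (r ^ ρ / c ^ ρ)) := fun c hc => (hreg.tendsto_div hne hr hc).comp hm
  have hcont : Tendsto (fun c : ℝ => r ^ ρ / c ^ ρ) (𝓝 1) (𝓝 (r ^ ρ)) := by
    have : ContinuousAt (fun c : ℝ => r ^ ρ / c ^ ρ) 1 :=
      continuousAt_const.div (Real.continuousAt_rpow_const 1 ρ (Or.inl one_ne_zero)) (by simp)
    simpa using this.tendsto
  -- `t F(r m) = t F(c m) · F(r m) / F(c m)`, and `t F(c m)` is `≤ 1` for `c > 1`, `> 1` for `c < 1`.
  have hsplit : ∀ᶠ t in atTop, ∀ c > 0, t * F (r * mFun F t)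
      = t * F (c * mFun F t) * (F (r * mFun F t) / F (c * mFun F t)) := by
    filter_upwards [hm.eventually_gt_atTop 0] with t ht c hc
    rw [mul_assoc, mul_div_cancel₀ _ (hpos _ (mul_pos hc ht)).ne']
  refine tendsto_order.2 ⟨fun a ha => ?_, fun a ha => ?_⟩
  · obtain ⟨c, hac, hc⟩ := (((hcont.mono_left nhdsWithin_le_nhds).eventually
      (lt_mem_nhds ha)).and (Ioo_mem_nhdsLT zero_lt_one)).exists
    filter_upwards [hsplit, (hratio c hc.1).eventually_const_lt hac,
      eventually_one_lt_mul_apply_mul_mFun hF h0 hpos hc.2, hm.eventually_gt_atTop 0]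
      with t hs hlt hgt hmt
    rw [hs c hc.1]
    have : 0 < F (r * mFun F t) / F (c * mFun F t) :=
      div_pos (hpos _ (mul_pos hr hmt)) (hpos _ (mul_pos hc.1 hmt))
    nlinarith
  · obtain ⟨c, hac, hc⟩ := (((hcont.mono_left nhdsWithin_le_nhds).eventually
      (gt_mem_nhds ha)).and (self_mem_nhdsWithin (s := Set.Ioi 1))).exists
    filter_upwards [hsplit, (hratio c (zero_lt_one.trans hc)).eventually_lt_const hac,
      eventually_mul_apply_mul_mFun_le_one hF h0 hpos hc, hm.eventually_gt_atTop 0]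
      with t hs hlt hle hmt
    rw [hs c (zero_lt_one.trans hc)]
    have : 0 < F (r * mFun F t) / F (c * mFun F t) :=
      div_pos (hpos _ (mul_pos hr hmt)) (hpos _ (mul_pos (zero_lt_one.trans hc) hmt))
    nlinarith

end Quantile

section Tail

variable {Ω : Type*} [MeasurableSpace Ω] {μ : Measure Ω} [IsFiniteMeasure μ] {X : Ω → ℝ}

lemma antitone_measureReal_setOf_lt : Antitone fun x => μ.real {ω | x < X ω} :=
  fun _ _ hxy => measureReal_mono fun _ hω => hxy.trans_lt hω

lemma tendsto_measureReal_setOf_lt_atTop (hX : AEMeasurable X μ) :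
    Tendsto (fun x => μ.real {ω | x < X ω}) atTop (𝓝 0) := by
  have hinter : ⋂ x : ℝ, {ω | x < X ω} = ∅ :=
    Set.iInter_eq_empty_iff.2 fun ω => ⟨X ω, lt_irrefl (X ω)⟩
  have h := tendsto_measure_iInter_atTop (μ := μ) (s := fun x : ℝ => {ω | x < X ω})
    (fun x => hX.nullMeasurableSet_preimage measurableSet_Ioi)
    (fun _ _ hxy _ hω => lt_of_le_of_lt hxy hω) ⟨0, measure_ne_top μ _⟩
  rw [hinter, measure_empty] at h
  exact (ENNReal.tendsto_toReal ENNReal.zero_ne_top).comp h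

end Tail

lemma integral_card_filter_lt {Ω ι : Type*} [MeasurableSpace Ω] {μ : Measure Ω}
    [IsFiniteMeasure μ] {X : ι → Ω → ℝ} {i₀ : ι} (hX : ∀ i, IdentDistrib (X i) (X i₀) μ μ)
    (S : Finset ι) (c : ℝ) :
    ∫ ω, (#{i ∈ S | c < X i ω} : ℝ) ∂μ = #S * μ.real {ω | c < X i₀ ω} := by
  have hset : ∀ i, NullMeasurableSet {ω | c < X i ω} μ :=
    fun i => (hX i).aemeasurable_fst.nullMeasurableSet_preimage measurableSet_Ioi
  have hcount : ∀ ω, (#{i ∈ S | c < X i ω} : ℝ) = ∑ i ∈ S, {ω | c < X i ω}.indicator 1 ω := by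
    intro ω
    rw [Finset.natCast_card_filter]
    simp only [Set.indicator_apply, Set.mem_ofPred_eq, Pi.one_apply]
  simp_rw [hcount]
  rw [integral_finsetSum _ fun i _ => (integrable_const 1).indicator₀ (hset i)]
  have hterm : ∀ i, ∫ ω, {ω | c < X i ω}.indicator 1 ω ∂μ = μ.real {ω | c < X i₀ ω} := by
    intro i
    rw [integral_indicator₀ (hset i), Pi.one_def, setIntegral_const, smul_eq_mul, mul_one]
    exact congrArg ENNReal.toReal ((hX i).measure_mem_eq measurableSet_Ioi)
  simp [hterm]

lemma card_Ioo_floor_ceil_bounds {u v : ℝ} (huv : u ≤ v) :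
    v - u - 1 ≤ (#(Ioo ⌊u⌋ ⌈v⌉) : ℝ) ∧ (#(Ioo ⌊u⌋ ⌈v⌉) : ℝ) ≤ v - u + 1 := by
  have hcard : (#(Ioo ⌊u⌋ ⌈v⌉) : ℝ) = (max (⌈v⌉ - ⌊u⌋ - 1) 0 : ℤ) := by
    rw [Int.card_Ioo, ← Int.toNat_eq_max]; norm_cast
  have hu := Int.floor_le u
  have hu' := Int.sub_one_lt_floor u
  have hv := Int.le_ceil v
  have hv' := Int.ceil_lt_add_one v
  rw [hcard]
  push_cast
  constructor
  · exact le_max_of_le_left (by linarith)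
  · exact max_le (by linarith) (by linarith)

lemma card_filter_even_Ioo (i A B : ℤ) :
    (#{x ∈ Ioo A B | (i + x) % 2 = 0} : ℤ) = ((B - i + 1) / 2 - (A - i) / 2 - 1).toNat := by
  have himage : {x ∈ Ioo A B | (i + x) % 2 = 0}
      = (Ioo ((A - i) / 2) ((B - i + 1) / 2)).image fun y => 2 * y + i := by
    ext x
    simp only [mem_filter, mem_Ioo, mem_image]
    constructor
    · rintro ⟨⟨h1, h2⟩, h3⟩
      exact ⟨(x - i) / 2, ⟨by omega, by omega⟩, by omega⟩
    · rintro ⟨y, ⟨h1, h2⟩, rfl⟩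
      exact ⟨⟨by omega, by omega⟩, by omega⟩
  rw [himage, card_image_of_injective _ fun y z h => by simpa using h, Int.card_Ioo]

lemma two_mul_card_filter_even_Ioo_bounds (i A B : ℤ) :
    (#(Ioo A B) : ℤ) ≤ 2 * #{x ∈ Ioo A B | (i + x) % 2 = 0} + 1 ∧
      2 * (#{x ∈ Ioo A B | (i + x) % 2 = 0} : ℤ) ≤ #(Ioo A B) + 1 := by
  rw [card_filter_even_Ioo, Int.card_Ioo]
  omega

lemma two_mul_card_filter_even_product_bounds (I : Finset ℤ) (A B : ℤ) :
    (#I : ℤ) * (#(Ioo A B) - 1) ≤ 2 * #{v ∈ I ×ˢ Ioo A B | (v.1 + v.2) % 2 = 0} ∧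
      2 * (#{v ∈ I ×ˢ Ioo A B | (v.1 + v.2) % 2 = 0} : ℤ) ≤ #I * (#(Ioo A B) + 1) := by
  have hrows : #{v ∈ I ×ˢ Ioo A B | (v.1 + v.2) % 2 = 0}
      = ∑ i ∈ I, #{x ∈ Ioo A B | (i + x) % 2 = 0} := by
    rw [card_filter, sum_product]
    exact sum_congr rfl fun i _ => (card_filter _ _).symm
  rw [hrows, Nat.cast_sum, mul_sum]
  constructor
  · refine (nsmul_eq_mul (#I) _).symm.trans_le (card_nsmul_le_sum _ _ _ fun i _ => ?_)
    linarith [(two_mul_card_filter_even_Ioo_bounds i A B).1]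
  · refine (sum_le_card_nsmul _ _ _ fun i _ => ?_).trans_eq (nsmul_eq_mul (#I) _)
    exact (two_mul_card_filter_even_Ioo_bounds i A B).2

lemma idxSet_eq_filter_Ioo_product {n : ℕ} (hn : 0 < n) {s₁ s₂ : ℝ} (hs₁ : 0 ≤ s₁)
    (hs₂ : s₂ ≤ 1) (a b : ℝ) :
    idxSet n s₁ s₂ a b = {v ∈ Ioo ⌊s₁ * n⌋ ⌈s₂ * n⌉ ×ˢ Ioo ⌊a * √n⌋ ⌈b * √n⌉ |
      (v.1 + v.2) % 2 = 0} := by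
  have hn' : (0 : ℝ) < n := Nat.cast_pos.2 hn
  have hsq : 0 < √(n : ℝ) := Real.sqrt_pos.2 hn'
  ext ⟨i, x⟩
  simp only [idxSet, mem_filter, mem_product, mem_Icc, mem_Ioo, Int.floor_lt, Int.lt_ceil,
    Int.ceil_le, Int.le_floor, lt_div_iff₀ hn', div_lt_iff₀ hn', lt_div_iff₀ hsq,
    div_lt_iff₀ hsq]
  constructor
  · rintro ⟨-, hpar, h1, h2, h3, h4⟩
    exact ⟨⟨⟨h1, h2⟩, h3, h4⟩, hpar⟩
  · rintro ⟨⟨⟨h1, h2⟩, h3, h4⟩, hpar⟩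
    refine ⟨⟨⟨?_, ?_⟩, h3.le, h4.le⟩, hpar, h1, h2, h3, h4⟩
    · exact_mod_cast (mul_nonneg hs₁ hn'.le).trans h1.le
    · exact_mod_cast h2.le.trans (mul_le_of_le_one_left hn'.le hs₂)

lemma two_mul_card_idxSet_bounds {n : ℕ} (hn : 0 < n) {s₁ s₂ a b : ℝ} (hs₁ : 0 ≤ s₁)
    (hs₂ : s₂ ≤ 1) (hX : 1 ≤ (s₂ - s₁) * n) (hY : 2 ≤ (b - a) * √n) :
    ((s₂ - s₁) * n - 1) * ((b - a) * √n - 2) ≤ 2 * (#(idxSet n s₁ s₂ a b) : ℝ) ∧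
      2 * (#(idxSet n s₁ s₂ a b) : ℝ) ≤ ((s₂ - s₁) * n + 1) * ((b - a) * √n + 2) := by
  obtain ⟨hJ₁, hJ₂⟩ := card_Ioo_floor_ceil_bounds (u := s₁ * n) (v := s₂ * n) (by nlinarith)
  obtain ⟨hK₁, hK₂⟩ := card_Ioo_floor_ceil_bounds (u := a * √n) (v := b * √n) (by nlinarith)
  obtain ⟨hlo, hhi⟩ := two_mul_card_filter_even_product_bounds (Ioo ⌊s₁ * n⌋ ⌈s₂ * n⌉)
    ⌊a * √n⌋ ⌈b * √n⌉
  rw [idxSet_eq_filter_Ioo_product hn hs₁ hs₂]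
  have hlo' := (Int.cast_le (R := ℝ)).2 hlo
  have hhi' := (Int.cast_le (R := ℝ)).2 hhi
  push_cast at hlo' hhi'
  constructor
  · refine le_trans (mul_le_mul ?_ ?_ ?_ ?_) hlo' <;> linarith
  · refine hhi'.trans (mul_le_mul ?_ ?_ ?_ ?_) <;> linarith

lemma rpow_three_halves {x : ℝ} (hx : 0 ≤ x) : x ^ ((3 : ℝ) / 2) = x * √x := by
  rw [show (3 : ℝ) / 2 = 1 + 1 / 2 by norm_num, Real.rpow_add' hx (by norm_num), Real.rpow_one,
    Real.sqrt_eq_rpow]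

theorem tendsto_card_idxSet_div {s₁ s₂ a b : ℝ} (hs₁ : 0 ≤ s₁) (hs : s₁ < s₂) (hs₂ : s₂ ≤ 1)
    (hab : a < b) :
    Tendsto (fun n : ℕ => (#(idxSet n s₁ s₂ a b) : ℝ) / (n : ℝ) ^ ((3 : ℝ) / 2)) atTop
      (𝓝 ((s₂ - s₁) * (b - a) / 2)) := by
  have hn : Tendsto (fun n : ℕ => (n : ℝ)) atTop atTop := tendsto_natCast_atTop_atTop
  have hsqrt : Tendsto (fun n : ℕ => √(n : ℝ)) atTop atTop := Real.tendsto_sqrt_atTop.comp hn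
  set bound : ℝ → ℕ → ℝ := fun σ n => ((s₂ - s₁) + σ / n) * ((b - a) + 2 * σ / √n) / 2
  have hbound : ∀ σ, Tendsto (bound σ) atTop (𝓝 ((s₂ - s₁) * (b - a) / 2)) := fun σ => by
    simpa using (((tendsto_const_nhds.div_atTop hn).const_add (s₂ - s₁)).mul
      ((tendsto_const_nhds.div_atTop hsqrt).const_add (b - a))).div_const 2
  have hX := (hn.const_mul_atTop (sub_pos.2 hs)).eventually_ge_atTop 1
  have hY := (hsqrt.const_mul_atTop (sub_pos.2 hab)).eventually_ge_atTop 2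
  have hsandwich : ∀ᶠ n : ℕ in atTop,
      bound (-1) n ≤ (#(idxSet n s₁ s₂ a b) : ℝ) / (n : ℝ) ^ ((3 : ℝ) / 2) ∧
        (#(idxSet n s₁ s₂ a b) : ℝ) / (n : ℝ) ^ ((3 : ℝ) / 2) ≤ bound 1 n := by
    filter_upwards [hX, hY, eventually_gt_atTop 0] with n hXn hYn hn0
    obtain ⟨hlo, hhi⟩ := two_mul_card_idxSet_bounds hn0 hs₁ hs₂ hXn hYn
    have hn' : (0 : ℝ) < n := Nat.cast_pos.2 hn0
    have hsq : 0 < √(n : ℝ) := Real.sqrt_pos.2 hn'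
    have hbound_eq : ∀ σ, bound σ n
        = ((s₂ - s₁) * n + σ) * ((b - a) * √n + 2 * σ) / 2 / (n : ℝ) ^ ((3 : ℝ) / 2) := by
      intro σ
      simp only [bound, rpow_three_halves hn'.le]
      field_simp
    rw [hbound_eq, hbound_eq]
    constructor <;> gcongr <;> linarith
  exact tendsto_of_tendsto_of_tendsto_of_le_of_le' (hbound (-1)) (hbound 1)
    (hsandwich.mono fun _ h => h.1) (hsandwich.mono fun _ h => h.2)

theorem stmt16_general
    {Ω : Type*} [MeasurableSpace Ω] (μ : Measure Ω) [IsProbabilityMeasure μ]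
    (env : ℤ × ℤ → Ω → ℝ)
    (hident : ∀ v w, IdentDistrib (env v) (env w) μ μ)
    (α : ℝ)
    (L : ℝ → ℝ) (hLpos : ∀ x > 0, 0 < L x) (hL : SlowlyVarying L)
    (htail : ∀ x > 0, (μ {a | x < env (0, 0) a}).toReal = x ^ (-α) * L x)
    (r : ℝ) (hr : 0 < r) (s₁ s₂ a b : ℝ)
    (hs : 0 ≤ s₁ ∧ s₁ < s₂ ∧ s₂ ≤ 1) (hab : a < b) :
    Tendsto (fun n => ∫ ωs, ((((idxSet n s₁ s₂ a b).filter
        (fun v => r * mFun (fun x => (μ {c | x < env (0, 0) c}).toReal)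
          ((n : ℝ) ^ ((3 : ℝ) / 2)) < env v ωs)).card : ℝ)) ∂μ)
      atTop (nhds (1 / 2 * (s₂ - s₁) * (b - a) * r ^ (-α))) := by
  obtain ⟨hs₁, hs, hs₂⟩ := hs
  set F : ℝ → ℝ := fun x => (μ {c | x < env (0, 0) c}).toReal
  have hF : Antitone F := antitone_measureReal_setOf_lt
  have h0 : Tendsto F atTop (𝓝 0) :=
    tendsto_measureReal_setOf_lt_atTop (hident (0, 0) (0, 0)).aemeasurable_fst
  have hpos : ∀ x > 0, 0 < F x := fun x hx => by
    rw [show F x = x ^ (-α) * L x from htail x hx]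
    exact mul_pos (Real.rpow_pos_of_pos hx _) (hLpos x hx)
  have hreg : RegularlyVarying F (-α) := regularlyVarying_of_eq_rpow_mul hL hLpos htail
  have hlim := (tendsto_card_idxSet_div hs₁ hs hs₂ hab).mul
    ((hreg.tendsto_mul_apply_mul_mFun hF h0 hpos hr).comp
      ((tendsto_rpow_atTop (by norm_num : (0 : ℝ) < 3 / 2)).comp tendsto_natCast_atTop_atTop))
  rw [show 1 / 2 * (s₂ - s₁) * (b - a) * r ^ (-α) = (s₂ - s₁) * (b - a) / 2 * r ^ (-α) by ring]
  refine hlim.congr' ?_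
  filter_upwards [eventually_gt_atTop 0] with n hn
  rw [integral_card_filter_lt (fun v => hident v (0, 0))]
  have hpow : (0 : ℝ) < (n : ℝ) ^ ((3 : ℝ) / 2) := Real.rpow_pos_of_pos (Nat.cast_pos.2 hn) _
  simp only [Function.comp_apply]
  rw [← mul_assoc, div_mul_cancel₀ _ hpow.ne']
  rfl

theorem stmt16
    {Ω : Type*} [MeasurableSpace Ω] (μ : Measure Ω) [IsProbabilityMeasure μ]
    (env : ℤ × ℤ → Ω → ℝ)
    (hmeas : ∀ v, Measurable (env v))
    (hindep : iIndepFun env μ)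
    (hident : ∀ v w, IdentDistrib (env v) (env w) μ μ)
    (α : ℝ) (hα : 0 < α)
    (L : ℝ → ℝ) (hLpos : ∀ x > 0, 0 < L x) (hL : SlowlyVarying L)
    (htail : ∀ x > 0, (μ {a | x < env (0, 0) a}).toReal = x ^ (-α) * L x)
    (r : ℝ) (hr : 0 < r) (s₁ s₂ a b : ℝ)
    (hs : 0 ≤ s₁ ∧ s₁ < s₂ ∧ s₂ ≤ 1) (hab : a < b) :
    Tendsto (fun n => ∫ ωs, ((((idxSet n s₁ s₂ a b).filter
        (fun v => r * mFun (fun x => (μ {c | x < env (0, 0) c}).toReal)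
          ((n : ℝ) ^ ((3 : ℝ) / 2)) < env v ωs)).card : ℝ)) ∂μ)
      atTop (nhds (1 / 2 * (s₂ - s₁) * (b - a) * r ^ (-α))) :=
  stmt16_general μ env hident α L hLpos hL htail r hr s₁ s₂ a b hs hab
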